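/- arXiv:2010.14905 — 4 statements merged into one kernel-verified Lean document; each statement's English description precedes it below -/
import Mathlib

section
/- Let n ≥ 1, and let ρ : ℝ × ℝⁿ → ℝ, V : ℝ × ℝⁿ → ℝⁿ, p : ℝ × ℝⁿ → ℝ be C¹ functions (with ρV also C¹ in t) satisfying the continuity equation ∂_t ρ + div_x(ρV) = 0 and the momentum equations ∂_t(ρVᵢ) + div_x(ρVᵢV) + ∂_{xᵢ} p = 0 (i = 1,…,n) pointwise. Assume there exists R > 0 such that for every t, the functions ρ(t,·), V(t,·), and p(t,·) vanish for |x| ≥ R. Then G(t) = (1/2)∫_{ℝⁿ} ρ(t,x)|x|² dx is twice differentiable in t with G'(t) = ∫_{ℝⁿ} ⟨V(t,x), x⟩ ρ(t,x) dx and G''(t) = ∫_{ℝⁿ} ρ|V|² dx + n ∫_{ℝⁿ} p dx. -/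
/-!
Differentiating under the integral sign and inserting the conservation law `∂ₜf = -∑ⱼ ∂ⱼgⱼ`, an
integration by parts in space (no boundary terms, by compact support) gives the weak form
`d/dt ∫ f φ = ∑ⱼ ∫ gⱼ ∂ⱼφ` for every `C¹` test function `φ`. The continuity equation with
`φ = |x|²` gives `G'`. Each momentum equation, with fluxes `ρVᵢVⱼ` and `p δᵢⱼ`, tested against
`φ = xᵢ` gives `d/dt ∫ ρVᵢxᵢ = ∫ ρVᵢ² + ∫ p`; summing over `i` gives `G''`.
-/

open MeasureTheory
open scoped RealInnerProductSpace

section Slices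

variable {E F : Type*} [NormedAddCommGroup E] [NormedSpace ℝ E]
  [NormedAddCommGroup F] [NormedSpace ℝ F]

theorem DifferentiableAt.hasDerivAt_comp_prodMk_left {f : ℝ × E → F} {t : ℝ} {x : E}
    (hf : DifferentiableAt ℝ f (t, x)) :
    HasDerivAt (fun s => f (s, x)) (fderiv ℝ f (t, x) (1, 0)) t := by
  have h := (hf.hasFDerivAt.comp t (hasFDerivAt_prodMk_left t x)).hasDerivAt
  simpa [Function.comp_def] using h

theorem DifferentiableAt.fderiv_comp_prodMk_right_apply {f : ℝ × E → F} {t : ℝ} {x : E}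
    (hf : DifferentiableAt ℝ f (t, x)) (v : E) :
    fderiv ℝ (fun y => f (t, y)) x v = fderiv ℝ f (t, x) (0, v) := by
  have h := hf.hasFDerivAt.comp x (hasFDerivAt_prodMk_right t x)
  simp [← Function.comp_def, h.fderiv]

end Slices

section Integrals

variable {E : Type*} [NormedAddCommGroup E] [NormedSpace ℝ E] [MeasurableSpace E] [BorelSpace E]
  {μ : Measure E}

theorem hasDerivAt_integral_of_contDiff_of_eq_zero_outside [IsFiniteMeasureOnCompacts μ]
    {f : ℝ × E → ℝ} (hf : ContDiff ℝ 1 f) {K : Set E} (hK : IsCompact K)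
    (hfK : ∀ s, ∀ x ∉ K, f (s, x) = 0) (t : ℝ) :
    HasDerivAt (fun s => ∫ x, f (s, x) ∂μ) (∫ x, fderiv ℝ f (t, x) (1, 0) ∂μ) t := by
  set f' : ℝ × E → ℝ := fun q => fderiv ℝ f q (1, 0)
  have hf' : Continuous f' := (hf.continuous_fderiv one_ne_zero).clm_apply continuous_const
  have hf'K : ∀ s, ∀ x ∉ K, f' (s, x) = 0 := by
    intro s x hx
    have hsupp : tsupport f ⊆ Set.univ ×ˢ K :=
      closure_minimal (fun q hq => ⟨trivial, by_contra fun h => hq (hfK q.1 q.2 h)⟩)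
        (isClosed_univ.prod hK.isClosed)
    have hnot : (s, x) ∉ tsupport f := fun h => hx (hsupp h).2
    simp [f', fderiv_of_notMem_tsupport ℝ hnot]
  obtain ⟨C, hC⟩ := ((isCompact_closedBall t 1).prod hK).exists_bound_of_continuousOn
    hf'.continuousOn
  have hbound : ∀ x, ∀ s ∈ Metric.ball t 1, ‖f' (s, x)‖ ≤ K.indicator (fun _ => C) x := by
    intro x s hs
    by_cases hx : x ∈ K
    · rw [Set.indicator_of_mem hx]
      exact hC (s, x) ⟨Metric.ball_subset_closedBall hs, hx⟩
    · simp [Set.indicator_of_notMem hx, hf'K s x hx]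
  have hslice : ∀ s, Continuous fun x => f (s, x) := fun s =>
    hf.continuous.comp (Continuous.prodMk_right s)
  exact (hasDerivAt_integral_of_dominated_loc_of_deriv_le (Metric.ball_mem_nhds t one_pos)
    (.of_forall fun s => (hslice s).aestronglyMeasurable)
    ((hslice t).integrable_of_hasCompactSupport (HasCompactSupport.intro hK (hfK t)))
    (hf'.comp (Continuous.prodMk_right t)).aestronglyMeasurable
    (.of_forall hbound)
    ((integrable_indicator_iff hK.measurableSet).2 (integrableOn_const hK.measure_lt_top.ne))
    (.of_forall fun x s _ =>
      ((hf.differentiable one_ne_zero) (s, x)).hasDerivAt_comp_prodMk_left)).2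

variable [FiniteDimensional ℝ E] [μ.IsAddHaarMeasure]

theorem integral_fderiv_mul_eq_neg_mul_fderiv_of_hasCompactSupport {g φ : E → ℝ}
    (hg : ContDiff ℝ 1 g) (hφ : ContDiff ℝ 1 φ) (hg_supp : HasCompactSupport g) (v : E) :
    ∫ x, fderiv ℝ g x v * φ x ∂μ = -∫ x, g x * fderiv ℝ φ x v ∂μ := by
  have hg' : Continuous fun x => fderiv ℝ g x v :=
    (hg.continuous_fderiv one_ne_zero).clm_apply continuous_const
  have hφ' : Continuous fun x => fderiv ℝ φ x v :=
    (hφ.continuous_fderiv one_ne_zero).clm_apply continuous_const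
  rw [integral_mul_fderiv_eq_neg_fderiv_mul_of_integrable
    ((hg'.mul hφ.continuous).integrable_of_hasCompactSupport (hg_supp.fderiv_apply ℝ v).mul_right)
    ((hg.continuous.mul hφ').integrable_of_hasCompactSupport hg_supp.mul_right)
    ((hg.continuous.mul hφ.continuous).integrable_of_hasCompactSupport hg_supp.mul_right)
    (fun x _ => hg.differentiable one_ne_zero x) (fun x _ => hφ.differentiable one_ne_zero x),
    neg_neg]

theorem hasDerivAt_integral_mul_of_conservationLaw {ι : Type*} [Fintype ι]
    {f : ℝ × E → ℝ} {g : ι → ℝ × E → ℝ} {v : ι → E} {φ : E → ℝ}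
    (hf : ContDiff ℝ 1 f) (hg : ∀ j, ContDiff ℝ 1 (g j)) (hφ : ContDiff ℝ 1 φ)
    {K : Set E} (hK : IsCompact K) (hfK : ∀ s, ∀ x ∉ K, f (s, x) = 0)
    (hgK : ∀ j s, ∀ x ∉ K, g j (s, x) = 0)
    (hcons : ∀ s x, fderiv ℝ f (s, x) (1, 0) + ∑ j, fderiv ℝ (g j) (s, x) (0, v j) = 0)
    (t : ℝ) :
    HasDerivAt (fun s => ∫ x, f (s, x) * φ x ∂μ)
      (∑ j, ∫ x, g j (t, x) * fderiv ℝ φ x (v j) ∂μ) t := by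
  have hfφ : ContDiff ℝ 1 fun q : ℝ × E => f q * φ q.2 := hf.mul (hφ.comp contDiff_snd)
  have hslice : ∀ j, ContDiff ℝ 1 fun x => g j (t, x) := fun j =>
    (hg j).comp (contDiff_const.prodMk contDiff_id)
  have htime : ∀ x, fderiv ℝ (fun q : ℝ × E => f q * φ q.2) (t, x) (1, 0)
      = -∑ j, fderiv ℝ (fun y => g j (t, y)) x (v j) * φ x := by
    intro x
    have h₁ := ((hf.differentiable one_ne_zero) (t, x)).hasDerivAt_comp_prodMk_left.mul_const (φ x)
    have h₂ := ((hfφ.differentiable one_ne_zero) (t, x)).hasDerivAt_comp_prodMk_left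
    rw [h₂.unique h₁, eq_neg_of_add_eq_zero_left (hcons t x), neg_mul, Finset.sum_mul]
    congr 2 with j
    rw [((hg j).differentiable one_ne_zero (t, x)).fderiv_comp_prodMk_right_apply]
  have hint : ∀ j, Integrable (fun x => fderiv ℝ (fun y => g j (t, y)) x (v j) * φ x) μ :=
    fun j => (((hslice j).continuous_fderiv one_ne_zero).clm_apply continuous_const
      |>.mul hφ.continuous).integrable_of_hasCompactSupport
      ((HasCompactSupport.intro hK (hgK j t)).fderiv_apply ℝ (v j)).mul_right
  convert hasDerivAt_integral_of_contDiff_of_eq_zero_outside (μ := μ) hfφ hK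
    (fun s x hx => by simp [hfK s x hx]) t using 1
  simp_rw [htime]
  rw [integral_neg, integral_finsetSum _ fun j _ => hint j, ← Finset.sum_neg_distrib]
  congr 1 with j
  rw [integral_fderiv_mul_eq_neg_mul_fderiv_of_hasCompactSupport (hslice j) hφ
    (HasCompactSupport.intro hK (hgK j t)), neg_neg]

end Integrals

section Euclidean

variable {n : ℕ} {X : Type*} [TopologicalSpace X] [MeasurableSpace X] [OpensMeasurableSpace X]
  {μ : Measure X} [IsFiniteMeasureOnCompacts μ]

theorem integral_mul_norm_sq_eq_sum_integral {u : X → EuclideanSpace ℝ (Fin n)} {r : X → ℝ}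
    (hu : Continuous u) (hr : Continuous r) (hr_supp : HasCompactSupport r) :
    ∫ x, r x * ‖u x‖ ^ 2 ∂μ = ∑ i, ∫ x, r x * u x i * u x i ∂μ := by
  have hint : ∀ i, Integrable (fun x => r x * u x i * u x i) μ := fun i =>
    ((hr.mul ((PiLp.continuous_apply 2 _ i).comp hu)).mul
      ((PiLp.continuous_apply 2 _ i).comp hu)).integrable_of_hasCompactSupport
        hr_supp.mul_right.mul_right
  rw [← integral_finsetSum _ fun i _ => hint i]
  congr 1 with x
  rw [EuclideanSpace.norm_sq_eq, Finset.mul_sum]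
  simp [mul_assoc, sq]

theorem integral_inner_mul_eq_sum_integral {u : EuclideanSpace ℝ (Fin n) → EuclideanSpace ℝ (Fin n)}
    {r : EuclideanSpace ℝ (Fin n) → ℝ}
    (hu : Continuous u) (hr : Continuous r) (hr_supp : HasCompactSupport r) :
    ∫ x, ⟪u x, x⟫ * r x = ∑ i, ∫ x, r x * u x i * x i := by
  have hint : ∀ i, Integrable (fun x => r x * u x i * x i) := fun i =>
    ((hr.mul ((PiLp.continuous_apply 2 _ i).comp hu)).mul
      (PiLp.continuous_apply 2 _ i)).integrable_of_hasCompactSupport hr_supp.mul_right.mul_right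
  rw [← integral_finsetSum _ fun i _ => hint i]
  congr 1 with x
  simp only [PiLp.inner_apply, RCLike.inner_apply, conj_trivial, Finset.sum_mul]
  exact Finset.sum_congr rfl fun i _ => by ring

end Euclidean

section Euler

variable {n : ℕ} {ρ : ℝ × EuclideanSpace ℝ (Fin n) → ℝ}
  {V : ℝ × EuclideanSpace ℝ (Fin n) → EuclideanSpace ℝ (Fin n)}
  {p : ℝ × EuclideanSpace ℝ (Fin n) → ℝ} {K : Set (EuclideanSpace ℝ (Fin n))}

theorem hasDerivAt_half_integral_mul_norm_sq (hρ : ContDiff ℝ 1 ρ) (hV : ContDiff ℝ 1 V)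
    (hK : IsCompact K) (hρK : ∀ s, ∀ x ∉ K, ρ (s, x) = 0)
    (hcont : ∀ t x, fderiv ℝ ρ (t, x) (1, 0)
      + ∑ i, fderiv ℝ (fun q => ρ q * V q i) (t, x) (0, EuclideanSpace.single i 1) = 0)
    (t : ℝ) :
    HasDerivAt (fun s => (1 / 2) * ∫ x, ρ (s, x) * ‖x‖ ^ 2) (∫ x, ⟪V (t, x), x⟫ * ρ (t, x)) t := by
  have hVi : ∀ i, ContDiff ℝ 1 fun q => V q i := fun i =>
    (EuclideanSpace.proj i : EuclideanSpace ℝ (Fin n) →L[ℝ] ℝ).contDiff.comp hV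
  refine ((hasDerivAt_integral_mul_of_conservationLaw (μ := volume) (φ := fun x => ‖x‖ ^ 2)
    hρ (fun i => hρ.mul (hVi i)) (contDiff_norm_sq ℝ) hK hρK
    (fun i s x hx => by simp [hρK s x hx]) hcont t).const_mul (1 / 2)).congr_deriv ?_
  rw [integral_inner_mul_eq_sum_integral (u := fun x => V (t, x)) (r := fun x => ρ (t, x))
    (hV.continuous.comp (Continuous.prodMk_right t))
    (hρ.continuous.comp (Continuous.prodMk_right t)) (HasCompactSupport.intro hK (hρK t)),
    Finset.mul_sum]
  congr 1 with i
  rw [← integral_const_mul]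
  congr 1 with x
  simp only [fderiv_norm_sq_apply, smul_apply, coe_innerSL_apply,
    EuclideanSpace.inner_single_right, Real.ringHom_apply, one_mul, nsmul_eq_mul]
  ring

theorem hasDerivAt_integral_mul_mul_apply (hρ : ContDiff ℝ 1 ρ) (hV : ContDiff ℝ 1 V)
    (hp : ContDiff ℝ 1 p) (hK : IsCompact K) (hρK : ∀ s, ∀ x ∉ K, ρ (s, x) = 0)
    (hpK : ∀ s, ∀ x ∉ K, p (s, x) = 0) (i : Fin n)
    (hmom : ∀ t x, fderiv ℝ (fun q => ρ q * V q i) (t, x) (1, 0)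
      + ∑ j, fderiv ℝ (fun q => ρ q * V q i * V q j) (t, x) (0, EuclideanSpace.single j 1)
      + fderiv ℝ p (t, x) (0, EuclideanSpace.single i 1) = 0)
    (t : ℝ) :
    HasDerivAt (fun s => ∫ x, ρ (s, x) * V (s, x) i * x i)
      ((∫ x, p (t, x)) + ∫ x, ρ (t, x) * V (t, x) i * V (t, x) i) t := by
  have hVi : ∀ j, ContDiff ℝ 1 fun q => V q j := fun j =>
    (EuclideanSpace.proj j : EuclideanSpace ℝ (Fin n) →L[ℝ] ℝ).contDiff.comp hV
  have hproj : ∀ x w, fderiv ℝ (fun y : EuclideanSpace ℝ (Fin n) => y i) x w = w i := by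
    intro x w
    rw [show (fun y : EuclideanSpace ℝ (Fin n) => y i) = EuclideanSpace.proj i from rfl,
      ContinuousLinearMap.fderiv]
    rfl
  -- the flux indexed by `none` is the pressure, acting in direction `eᵢ`
  refine (hasDerivAt_integral_mul_of_conservationLaw (μ := volume)
    (g := fun o : Option (Fin n) => o.elim p fun j q => ρ q * V q i * V q j)
    (v := fun o : Option (Fin n) => o.elim (EuclideanSpace.single i 1)
      fun j => EuclideanSpace.single j 1)
    (φ := fun x => x i) (hρ.mul (hVi i)) (fun o => o.rec hp fun j => (hρ.mul (hVi i)).mul (hVi j))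
    (EuclideanSpace.proj i : EuclideanSpace ℝ (Fin n) →L[ℝ] ℝ).contDiff hK
    (fun s x hx => by simp [hρK s x hx])
    (fun o s x hx => o.rec (hpK s x hx) fun j => by simp [hρK s x hx])
    (fun s x => by
      rw [Fintype.sum_option, ← add_assoc, add_right_comm]
      exact hmom s x) t).congr_deriv ?_
  rw [Fintype.sum_option, Finset.sum_eq_single i]
  · simp [hproj]
  · intro j _ hji
    simp [hproj, Ne.symm hji]
  · simp

theorem hasDerivAt_integral_inner_mul (hρ : ContDiff ℝ 1 ρ) (hV : ContDiff ℝ 1 V)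
    (hp : ContDiff ℝ 1 p) (hK : IsCompact K) (hρK : ∀ s, ∀ x ∉ K, ρ (s, x) = 0)
    (hpK : ∀ s, ∀ x ∉ K, p (s, x) = 0)
    (hmom : ∀ t x i, fderiv ℝ (fun q => ρ q * V q i) (t, x) (1, 0)
      + ∑ j, fderiv ℝ (fun q => ρ q * V q i * V q j) (t, x) (0, EuclideanSpace.single j 1)
      + fderiv ℝ p (t, x) (0, EuclideanSpace.single i 1) = 0)
    (t : ℝ) :
    HasDerivAt (fun s => ∫ x, ⟪V (s, x), x⟫ * ρ (s, x))
      ((∫ x, ρ (t, x) * ‖V (t, x)‖ ^ 2) + n * ∫ x, p (t, x)) t := by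
  have hρ_slice : ∀ s, Continuous fun x => ρ (s, x) := fun s =>
    hρ.continuous.comp (Continuous.prodMk_right s)
  have hV_slice : ∀ s, Continuous fun x => V (s, x) := fun s =>
    hV.continuous.comp (Continuous.prodMk_right s)
  have hρ_supp : ∀ s, HasCompactSupport fun x => ρ (s, x) := fun s =>
    HasCompactSupport.intro hK (hρK s)
  rw [funext fun s => integral_inner_mul_eq_sum_integral (hV_slice s) (hρ_slice s) (hρ_supp s)]
  refine (HasDerivAt.fun_sum fun i _ => hasDerivAt_integral_mul_mul_apply hρ hV hp hK hρK hpK i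
    (fun t x => hmom t x i) t).congr_deriv ?_
  rw [Finset.sum_add_distrib,
    integral_mul_norm_sq_eq_sum_integral (hV_slice t) (hρ_slice t) (hρ_supp t)]
  simp only [Finset.sum_const, Finset.card_univ, Fintype.card_fin, nsmul_eq_mul]
  ring

end Euler

theorem stmt2_general
    (n : ℕ)
    (ρ : ℝ × EuclideanSpace ℝ (Fin n) → ℝ)
    (V : ℝ × EuclideanSpace ℝ (Fin n) → EuclideanSpace ℝ (Fin n))
    (p : ℝ × EuclideanSpace ℝ (Fin n) → ℝ)
    (hρ : ContDiff ℝ 1 ρ) (hV : ContDiff ℝ 1 V) (hp : ContDiff ℝ 1 p)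
    (hcont : ∀ t : ℝ, ∀ x : EuclideanSpace ℝ (Fin n),
      fderiv ℝ ρ (t, x) (1, 0)
        + ∑ i : Fin n,
            fderiv ℝ (fun q => ρ q * V q i) (t, x) (0, EuclideanSpace.single i 1) = 0)
    (hmom : ∀ t : ℝ, ∀ x : EuclideanSpace ℝ (Fin n), ∀ i : Fin n,
      fderiv ℝ (fun q => ρ q * V q i) (t, x) (1, 0)
        + ∑ j : Fin n,
            fderiv ℝ (fun q => ρ q * V q i * V q j) (t, x) (0, EuclideanSpace.single j 1)
        + fderiv ℝ p (t, x) (0, EuclideanSpace.single i 1) = 0)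
    (R : ℝ)
    (hsupp : ∀ t : ℝ, ∀ x : EuclideanSpace ℝ (Fin n), R ≤ ‖x‖ →
      ρ (t, x) = 0 ∧ V (t, x) = 0 ∧ p (t, x) = 0) :
    (∀ t : ℝ,
      HasDerivAt (fun s => (1 / 2) * ∫ x : EuclideanSpace ℝ (Fin n), ρ (s, x) * ‖x‖ ^ 2)
        (∫ x : EuclideanSpace ℝ (Fin n), ⟪V (t, x), x⟫ * ρ (t, x)) t) ∧
    ∀ t : ℝ,
      HasDerivAt (fun s => ∫ x : EuclideanSpace ℝ (Fin n), ⟪V (s, x), x⟫ * ρ (s, x))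
        ((∫ x : EuclideanSpace ℝ (Fin n), ρ (t, x) * ‖V (t, x)‖ ^ 2)
          + n * ∫ x : EuclideanSpace ℝ (Fin n), p (t, x)) t := by
  have hfar : ∀ x ∉ Metric.closedBall (0 : EuclideanSpace ℝ (Fin n)) R, R ≤ ‖x‖ := by
    intro x hx
    simp only [Metric.mem_closedBall, dist_zero_right, not_le] at hx
    exact hx.le
  have hK := isCompact_closedBall (0 : EuclideanSpace ℝ (Fin n)) R
  have hρK : ∀ s, ∀ x ∉ Metric.closedBall 0 R, ρ (s, x) = 0 := fun s x hx =>
    (hsupp s x (hfar x hx)).1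
  have hpK : ∀ s, ∀ x ∉ Metric.closedBall 0 R, p (s, x) = 0 := fun s x hx =>
    (hsupp s x (hfar x hx)).2.2
  exact ⟨hasDerivAt_half_integral_mul_norm_sq hρ hV hK hρK hcont,
    hasDerivAt_integral_inner_mul hρ hV hp hK hρK hpK hmom⟩

/-- Corollary 1: second moment of mass, compactly supported flow.
For `C¹` compactly supported solutions of the continuity and momentum equations,
`G(t) = (1/2)∫ ρ(t,x)|x|² dx` satisfies `G'(t) = ∫ ⟨V,x⟩ ρ dx` and
`G''(t) = ∫ ρ|V|² dx + n ∫ p dx`. -/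
theorem stmt2
    (n : ℕ) (hn : 1 ≤ n)
    (ρ : ℝ × EuclideanSpace ℝ (Fin n) → ℝ)
    (V : ℝ × EuclideanSpace ℝ (Fin n) → EuclideanSpace ℝ (Fin n))
    (p : ℝ × EuclideanSpace ℝ (Fin n) → ℝ)
    (hρ : ContDiff ℝ 1 ρ) (hV : ContDiff ℝ 1 V) (hp : ContDiff ℝ 1 p)
    (hρV : ContDiff ℝ 1 (fun q => ρ q • V q))
    (hcont : ∀ t : ℝ, ∀ x : EuclideanSpace ℝ (Fin n),
      fderiv ℝ ρ (t, x) (1, 0)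
        + ∑ i : Fin n,
            fderiv ℝ (fun q => ρ q * V q i) (t, x) (0, EuclideanSpace.single i 1) = 0)
    (hmom : ∀ t : ℝ, ∀ x : EuclideanSpace ℝ (Fin n), ∀ i : Fin n,
      fderiv ℝ (fun q => ρ q * V q i) (t, x) (1, 0)
        + ∑ j : Fin n,
            fderiv ℝ (fun q => ρ q * V q i * V q j) (t, x) (0, EuclideanSpace.single j 1)
        + fderiv ℝ p (t, x) (0, EuclideanSpace.single i 1) = 0)
    (R : ℝ) (hR : 0 < R)
    (hsupp : ∀ t : ℝ, ∀ x : EuclideanSpace ℝ (Fin n), R ≤ ‖x‖ →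
      ρ (t, x) = 0 ∧ V (t, x) = 0 ∧ p (t, x) = 0) :
    (∀ t : ℝ,
      HasDerivAt (fun s => (1 / 2) * ∫ x : EuclideanSpace ℝ (Fin n), ρ (s, x) * ‖x‖ ^ 2)
        (∫ x : EuclideanSpace ℝ (Fin n), ⟪V (t, x), x⟫ * ρ (t, x)) t) ∧
    ∀ t : ℝ,
      HasDerivAt (fun s => ∫ x : EuclideanSpace ℝ (Fin n), ⟪V (s, x), x⟫ * ρ (s, x))
        ((∫ x : EuclideanSpace ℝ (Fin n), ρ (t, x) * ‖V (t, x)‖ ^ 2)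
          + n * ∫ x : EuclideanSpace ℝ (Fin n), p (t, x)) t :=
  stmt2_general n ρ V p hρ hV hp hcont hmom R hsupp
end

section
/- Let γ > 1 and K₁ ≥ 0 be real constants, let K₂ : [0,T] → ℝ be continuous, and let y₋, y₊ : [0,T] → ℝ be twice differentiable functions such that y₋''(t) = K₁ y₋(t)^γ − K₂(t) and y₊''(t) ≥ K₁ y₊(t)^γ − K₂(t) for all t ∈ [0,T]. Assume y₊(t) > 0 for all t ∈ [0,T], y₋(0) > 0, y₋(0) ≤ y₊(0), y₋'(0) ≤ y₊'(0), and y₋(t) > 0 for all t ∈ (0,T]. Then y₋(t) ≤ y₊(t) for all t ∈ [0,T]. -/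
/-!
By Bernoulli's inequality `yp ^ γ - ym ^ γ ≥ γ ym ^ (γ - 1) (yp - ym)`, so `w = yp - ym`
satisfies the linear inequality `w'' ≥ M min(w, 0)` with `M` a bound for `γ K₁ ym ^ (γ - 1)`
on `[0, T]`, and `w(0), w'(0) ≥ 0`. Starting from a lower bound `w ≥ -B` and integrating twice,
induction gives `w(t) ≥ -B M ^ k t ^ (2k) / (2k)!` for every `k`; letting `k → ∞` yields
`w ≥ 0`.
-/

open Set Filter Nat Topology

theorem neg_mul_pow_le_of_hasDerivAt {T c : ℝ} {f f' : ℝ → ℝ} (n : ℕ)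
    (hf : ∀ t ∈ Icc 0 T, HasDerivAt f (f' t) t)
    (hf' : ∀ t ∈ Icc 0 T, -(c * t ^ n) ≤ f' t) (h0 : 0 ≤ f 0) :
    ∀ t ∈ Icc 0 T, -(c / (n + 1) * t ^ (n + 1)) ≤ f t := by
  set g : ℝ → ℝ := fun t ↦ f t + c / (n + 1) * t ^ (n + 1)
  have hg : ∀ t ∈ Icc 0 T, HasDerivAt g (f' t + c * t ^ n) t := by
    intro t ht
    refine ((hf t ht).add ((hasDerivAt_pow (n + 1) t).const_mul (c / (n + 1)))).congr_deriv ?_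
    simp only [add_tsub_cancel_right, cast_add, cast_one]
    field_simp
  have hmono : MonotoneOn g (Icc 0 T) := by
    refine monotoneOn_of_hasDerivWithinAt_nonneg (f' := fun t ↦ f' t + c * t ^ n)
      (convex_Icc 0 T) (fun t ht ↦ (hg t ht).continuousAt.continuousWithinAt)
      (fun t ht ↦ ?_) (fun t ht ↦ ?_)
    all_goals rw [interior_Icc] at ht
    · exact (hg t (Ioo_subset_Icc_self ht)).hasDerivWithinAt
    · linarith [hf' t (Ioo_subset_Icc_self ht)]
  intro t ht
  have hg0 : g 0 = f 0 := by simp [g]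
  linarith [hmono ⟨le_rfl, ht.1.trans ht.2⟩ ht ht.1]

theorem neg_mul_pow_le_of_hasDerivAt_two {T c : ℝ} {w w' D : ℝ → ℝ} (n : ℕ)
    (hw : ∀ t ∈ Icc 0 T, HasDerivAt w (w' t) t)
    (hw' : ∀ t ∈ Icc 0 T, HasDerivAt w' (D t) t)
    (hD : ∀ t ∈ Icc 0 T, -(c * t ^ n) ≤ D t) (hw0 : 0 ≤ w 0) (hw'0 : 0 ≤ w' 0) :
    ∀ t ∈ Icc 0 T, -(c / ((n + 1) * (n + 2)) * t ^ (n + 2)) ≤ w t := by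
  have h := neg_mul_pow_le_of_hasDerivAt (n + 1) hw
    (neg_mul_pow_le_of_hasDerivAt n hw' hD hw'0) hw0
  intro t ht
  convert h t ht using 3
  push_cast
  rw [div_div]
  ring

theorem neg_mul_pow_div_factorial_le {T B M : ℝ} {w w' D : ℝ → ℝ}
    (hB : 0 ≤ B) (hM : 0 ≤ M)
    (hw : ∀ t ∈ Icc 0 T, HasDerivAt w (w' t) t)
    (hw' : ∀ t ∈ Icc 0 T, HasDerivAt w' (D t) t)
    (hD : ∀ t ∈ Icc 0 T, M * min (w t) 0 ≤ D t) (hw0 : 0 ≤ w 0) (hw'0 : 0 ≤ w' 0)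
    (hBw : ∀ t ∈ Icc 0 T, -B ≤ w t) (k : ℕ) :
    ∀ t ∈ Icc 0 T, -(B * M ^ k / (2 * k)! * t ^ (2 * k)) ≤ w t := by
  induction k with
  | zero => simpa using hBw
  | succ k ih =>
    have hD' : ∀ t ∈ Icc 0 T, -(M * (B * M ^ k / (2 * k)!) * t ^ (2 * k)) ≤ D t := by
      intro t ht
      have hmin : -(B * M ^ k / (2 * k)! * t ^ (2 * k)) ≤ min (w t) 0 := by
        refine le_min (ih t ht) (neg_nonpos.2 ?_)
        have := ht.1
        positivity
      nlinarith [hD t ht, mul_le_mul_of_nonneg_left hmin hM]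
    intro t ht
    convert neg_mul_pow_le_of_hasDerivAt_two (2 * k) hw hw' hD' hw0 hw'0 t ht using 3
    · rw [show 2 * (k + 1) = 2 * k + 1 + 1 by ring, factorial_succ, factorial_succ]
      push_cast
      field_simp
      ring
    · ring

theorem tendsto_mul_pow_div_factorial_mul_pow_two_mul {M : ℝ} (hM : 0 ≤ M) (B t : ℝ) :
    Tendsto (fun k : ℕ ↦ B * M ^ k / (2 * k)! * t ^ (2 * k)) atTop (𝓝 0) := by
  have h := ((FloorSemiring.tendsto_pow_div_factorial_atTop (√M * t)).comp
    (strictMono_mul_left_of_pos two_pos).tendsto_atTop).const_mul B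
  rw [mul_zero] at h
  refine h.congr fun k ↦ ?_
  simp only [Function.comp_apply, mul_pow, pow_mul, Real.sq_sqrt hM]
  ring

theorem nonneg_of_hasDerivAt_two_of_mul_min_le {T M : ℝ} {w w' D : ℝ → ℝ} (hM : 0 ≤ M)
    (hw : ∀ t ∈ Icc 0 T, HasDerivAt w (w' t) t)
    (hw' : ∀ t ∈ Icc 0 T, HasDerivAt w' (D t) t)
    (hD : ∀ t ∈ Icc 0 T, M * min (w t) 0 ≤ D t) (hw0 : 0 ≤ w 0) (hw'0 : 0 ≤ w' 0) :
    ∀ t ∈ Icc 0 T, 0 ≤ w t := by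
  obtain ⟨b, hb⟩ := isCompact_Icc.bddBelow_image
    fun t ht ↦ (hw t ht).continuousAt.continuousWithinAt
  have hBw : ∀ t ∈ Icc 0 T, -|b| ≤ w t := fun t ht ↦
    (neg_abs_le b).trans (hb (mem_image_of_mem w ht))
  intro t ht
  have hlim := (tendsto_mul_pow_div_factorial_mul_pow_two_mul hM |b| t).neg
  rw [neg_zero] at hlim
  refine le_of_tendsto hlim (Eventually.of_forall fun k ↦ ?_)
  exact neg_mul_pow_div_factorial_le (abs_nonneg b) hM hw hw' hD hw0 hw'0 hBw k t ht

theorem mul_rpow_sub_one_mul_sub_le_rpow_sub_rpow {a b p : ℝ} (ha : 0 < a) (hb : 0 ≤ b)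
    (hp : 1 ≤ p) : p * a ^ (p - 1) * (b - a) ≤ b ^ p - a ^ p := by
  have hbern : 1 + p * (b / a - 1) ≤ (b / a) ^ p := by
    have := one_add_mul_self_le_rpow_one_add (s := b / a - 1) (by
      have : 0 ≤ b / a := by positivity
      linarith) hp
    rwa [add_sub_cancel] at this
  calc p * a ^ (p - 1) * (b - a) = a ^ p * (p * (b / a - 1)) := by
        rw [Real.rpow_sub_one ha.ne']
        field_simp
    _ ≤ a ^ p * ((b / a) ^ p - 1) := by gcongr; linarith
    _ = b ^ p - a ^ p := by
        rw [Real.div_rpow hb ha.le, mul_sub, mul_div_cancel₀ _ (Real.rpow_pos_of_pos ha p).ne']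
        ring

theorem stmt3_general
    (γ K₁ T : ℝ) (hγ : 1 < γ) (hK₁ : 0 ≤ K₁)
    (K₂ : ℝ → ℝ)
    (ym yp ym' yp' yp'' : ℝ → ℝ)
    (hym' : ∀ t ∈ Set.Icc (0 : ℝ) T, HasDerivAt ym (ym' t) t)
    (hyp' : ∀ t ∈ Set.Icc (0 : ℝ) T, HasDerivAt yp (yp' t) t)
    (hym'' : ∀ t ∈ Set.Icc (0 : ℝ) T,
      HasDerivAt ym' (K₁ * ym t ^ γ - K₂ t) t)
    (hyp'' : ∀ t ∈ Set.Icc (0 : ℝ) T, HasDerivAt yp' (yp'' t) t)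
    (hineq : ∀ t ∈ Set.Icc (0 : ℝ) T, K₁ * yp t ^ γ - K₂ t ≤ yp'' t)
    (hyppos : ∀ t ∈ Set.Icc (0 : ℝ) T, 0 < yp t)
    (hym0 : 0 < ym 0) (h0 : ym 0 ≤ yp 0) (h0' : ym' 0 ≤ yp' 0)
    (hympos : ∀ t ∈ Set.Ioc (0 : ℝ) T, 0 < ym t) :
    ∀ t ∈ Set.Icc (0 : ℝ) T, ym t ≤ yp t := by
  have hym_pos : ∀ t ∈ Icc 0 T, 0 < ym t := fun t ht ↦
    ht.1.eq_or_lt.elim (fun h ↦ h ▸ hym0) fun h ↦ hympos t ⟨h, ht.2⟩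
  obtain ⟨M, hM⟩ := isCompact_Icc.bddAbove_image (f := fun t ↦ γ * K₁ * ym t ^ (γ - 1))
    (continuousOn_const.mul (ContinuousOn.rpow_const
      (fun t ht ↦ (hym' t ht).continuousAt.continuousWithinAt)
      fun t ht ↦ Or.inl (hym_pos t ht).ne'))
  -- linearizing `yp ^ γ` at `ym` turns the comparison into `w'' ≥ M * min w 0` for `w = yp - ym`
  have hD : ∀ t ∈ Icc 0 T,
      max M 0 * min (yp t - ym t) 0 ≤ yp'' t - (K₁ * ym t ^ γ - K₂ t) := fun t ht ↦ by
    have hslope : 0 ≤ γ * K₁ * ym t ^ (γ - 1) := by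
      have := (hym_pos t ht).le
      positivity
    have htangent :=
      mul_rpow_sub_one_mul_sub_le_rpow_sub_rpow (hym_pos t ht) (hyppos t ht).le hγ.le
    calc max M 0 * min (yp t - ym t) 0
        ≤ γ * K₁ * ym t ^ (γ - 1) * min (yp t - ym t) 0 :=
          mul_le_mul_of_nonpos_right ((hM (mem_image_of_mem _ ht)).trans (le_max_left M 0))
            (min_le_right _ _)
      _ ≤ γ * K₁ * ym t ^ (γ - 1) * (yp t - ym t) :=
          mul_le_mul_of_nonneg_left (min_le_left _ _) hslope
      _ = K₁ * (γ * ym t ^ (γ - 1) * (yp t - ym t)) := by ring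
      _ ≤ K₁ * (yp t ^ γ - ym t ^ γ) := mul_le_mul_of_nonneg_left htangent hK₁
      _ ≤ yp'' t - (K₁ * ym t ^ γ - K₂ t) := by linarith [hineq t ht]
  intro t ht
  exact sub_nonneg.1 <| nonneg_of_hasDerivAt_two_of_mul_min_le (le_max_right M 0)
    (fun t ht ↦ (hyp' t ht).sub (hym' t ht)) (fun t ht ↦ (hyp'' t ht).sub (hym'' t ht)) hD
    (sub_nonneg.2 h0) (sub_nonneg.2 h0') t ht

/-- Proposition 3: comparison principle for `y'' ≥ K₁ yᵞ − K₂(t)`.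
If `y₋'' = K₁ y₋^γ − K₂(t)` and `y₊'' ≥ K₁ y₊^γ − K₂(t)` on `[0,T]`, with
`y₊ > 0` on `[0,T]`, `0 < y₋(0) ≤ y₊(0)`, `y₋'(0) ≤ y₊'(0)` and `y₋ > 0`
on `(0,T]`, then `y₋ ≤ y₊` on `[0,T]`.  Here `x ^ γ` is the real power. -/
theorem stmt3
    (γ K₁ T : ℝ) (hγ : 1 < γ) (hK₁ : 0 ≤ K₁) (hT : 0 ≤ T)
    (K₂ : ℝ → ℝ) (hK₂ : ContinuousOn K₂ (Set.Icc 0 T))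
    (ym yp ym' yp' yp'' : ℝ → ℝ)
    (hym' : ∀ t ∈ Set.Icc (0 : ℝ) T, HasDerivAt ym (ym' t) t)
    (hyp' : ∀ t ∈ Set.Icc (0 : ℝ) T, HasDerivAt yp (yp' t) t)
    (hym'' : ∀ t ∈ Set.Icc (0 : ℝ) T,
      HasDerivAt ym' (K₁ * ym t ^ γ - K₂ t) t)
    (hyp'' : ∀ t ∈ Set.Icc (0 : ℝ) T, HasDerivAt yp' (yp'' t) t)
    (hineq : ∀ t ∈ Set.Icc (0 : ℝ) T, K₁ * yp t ^ γ - K₂ t ≤ yp'' t)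
    (hyppos : ∀ t ∈ Set.Icc (0 : ℝ) T, 0 < yp t)
    (hym0 : 0 < ym 0) (h0 : ym 0 ≤ yp 0) (h0' : ym' 0 ≤ yp' 0)
    (hympos : ∀ t ∈ Set.Ioc (0 : ℝ) T, 0 < ym t) :
    ∀ t ∈ Set.Icc (0 : ℝ) T, ym t ≤ yp t :=
  stmt3_general γ K₁ T hγ hK₁ K₂ ym yp ym' yp' yp'' hym' hyp' hym'' hyp'' hineq hyppos hym0 h0 h0'
    hympos
end

section
/- Let n ≥ 1, let ρ : ℝⁿ → [0,∞) and V : ℝⁿ → ℝⁿ be measurable, let φ : [0,∞) → [0,∞) be differentiable, and let M ≥ 0 be a constant with φ'(r)² ≤ M φ(r) for all r > 0. Assume that x ↦ ρ(x)φ(|x|), x ↦ ρ(x)|V(x)|², and x ↦ (φ'(|x|)/|x|)⟨V(x),x⟩ρ(x) are integrable on ℝⁿ. Then (∫_{ℝⁿ} (φ'(|x|)/|x|) ⟨V(x),x⟩ ρ(x) dx)² ≤ M (∫_{ℝⁿ} ρ(x)φ(|x|) dx)(∫_{ℝⁿ} ρ(x)|V(x)|² dx), where the first integrand is interpreted as 0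 at x = 0. -/
open MeasureTheory
open scoped Classical
open scoped RealInnerProductSpace

/-! The square of the integrand is bounded pointwise by `(M ρ φ(|x|)) · (ρ |V|²)`: Cauchy–Schwarz
in `ℝⁿ` cancels the factor `|x|`, and `φ'² ≤ M φ` does the rest. Cauchy–Schwarz for integrals,
`(∫ f)² ≤ ∫ a · ∫ b` whenever `f² ≤ a b`, then gives the claim; it follows from the
nonnegativity of the quadratic `s ↦ s² ∫ a - 2 s ∫ f + ∫ b`. -/

lemma two_mul_mul_le_sq_mul_add {f a b : ℝ} (ha : 0 ≤ a) (hb : 0 ≤ b) (hfab : f ^ 2 ≤ a * b)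
    (s : ℝ) : 2 * s * f ≤ s ^ 2 * a + b := by
  have hsq : (2 * s * f) ^ 2 ≤ (s ^ 2 * a + b) ^ 2 := by
    nlinarith [sq_nonneg (s ^ 2 * a - b), sq_nonneg s]
  exact (abs_le_of_sq_le_sq' hsq (by positivity)).2

theorem sq_integral_le_integral_mul_integral_of_sq_le_mul {α : Type*} [MeasurableSpace α]
    {μ : Measure α} {f a b : α → ℝ} (ha : 0 ≤ᵐ[μ] a) (hb : 0 ≤ᵐ[μ] b)
    (ha_int : Integrable a μ) (hb_int : Integrable b μ) (hfab : ∀ᵐ x ∂μ, f x ^ 2 ≤ a x * b x) :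
    (∫ x, f x ∂μ) ^ 2 ≤ (∫ x, a x ∂μ) * ∫ x, b x ∂μ := by
  have hA : 0 ≤ ∫ x, a x ∂μ := integral_nonneg_of_ae ha
  have hB : 0 ≤ ∫ x, b x ∂μ := integral_nonneg_of_ae hb
  by_cases hf : Integrable f μ
  swap
  · rw [integral_undef hf, zero_pow two_ne_zero]
    exact mul_nonneg hA hB
  have hquad : ∀ s : ℝ,
      0 ≤ (∫ x, a x ∂μ) * (s * s) + (-2 * ∫ x, f x ∂μ) * s + ∫ x, b x ∂μ := by
    intro s
    have hmono : ∫ x, 2 * s * f x ∂μ ≤ ∫ x, s ^ 2 * a x + b x ∂μ := by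
      refine integral_mono_ae (hf.const_mul _) ((ha_int.const_mul _).add hb_int) ?_
      filter_upwards [ha, hb, hfab] with x hax hbx hfabx
      exact two_mul_mul_le_sq_mul_add hax hbx hfabx s
    rw [integral_const_mul, integral_add (ha_int.const_mul _) hb_int, integral_const_mul] at hmono
    nlinarith
  have := discrim_le_zero hquad
  rw [discrim] at this
  nlinarith

lemma sq_div_norm_mul_inner_mul_le {E : Type*} [NormedAddCommGroup E] [InnerProductSpace ℝ E]
    (c r : ℝ) (v x : E) : (c / ‖x‖ * ⟪v, x⟫ * r) ^ 2 ≤ c ^ 2 * ‖v‖ ^ 2 * r ^ 2 := by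
  rcases eq_or_ne x 0 with rfl | hx
  · simp only [norm_zero, div_zero, zero_mul, zero_pow two_ne_zero]
    positivity
  have hx' : 0 < ‖x‖ := norm_pos_iff.mpr hx
  have hinner : ⟪v, x⟫ ^ 2 ≤ (‖v‖ * ‖x‖) ^ 2 := by
    rw [← sq_abs]
    exact pow_le_pow_left₀ (abs_nonneg _) (abs_real_inner_le_norm v x) 2
  calc (c / ‖x‖ * ⟪v, x⟫ * r) ^ 2 = c ^ 2 * r ^ 2 * ⟪v, x⟫ ^ 2 / ‖x‖ ^ 2 := by
        field_simp
    _ ≤ c ^ 2 * r ^ 2 * (‖v‖ * ‖x‖) ^ 2 / ‖x‖ ^ 2 := by gcongr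
    _ = c ^ 2 * ‖v‖ ^ 2 * r ^ 2 := by field_simp

theorem stmt5_general
    (n : ℕ)
    (ρ : EuclideanSpace ℝ (Fin n) → ℝ)
    (V : EuclideanSpace ℝ (Fin n) → EuclideanSpace ℝ (Fin n))
    (hρpos : ∀ x, 0 ≤ ρ x)
    (φ φ' : ℝ → ℝ)
    (hφpos : ∀ r : ℝ, 0 ≤ r → 0 ≤ φ r)
    (M : ℝ) (hM : 0 ≤ M)
    (hMφ : ∀ r : ℝ, 0 < r → φ' r ^ 2 ≤ M * φ r)
    (hint1 : Integrable (fun x => ρ x * φ ‖x‖))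
    (hint2 : Integrable (fun x => ρ x * ‖V x‖ ^ 2)) :
    (∫ x : EuclideanSpace ℝ (Fin n),
        if x = 0 then 0 else (φ' ‖x‖ / ‖x‖) * ⟪V x, x⟫ * ρ x) ^ 2
      ≤ M * (∫ x : EuclideanSpace ℝ (Fin n), ρ x * φ ‖x‖)
          * (∫ x : EuclideanSpace ℝ (Fin n), ρ x * ‖V x‖ ^ 2) := by
  have hpoint : ∀ x : EuclideanSpace ℝ (Fin n),
      (if x = 0 then 0 else (φ' ‖x‖ / ‖x‖) * ⟪V x, x⟫ * ρ x) ^ 2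
        ≤ M * (ρ x * φ ‖x‖) * (ρ x * ‖V x‖ ^ 2) := by
    intro x
    have hφx := hφpos ‖x‖ (norm_nonneg x)
    split_ifs with hx
    · have := hρpos x
      rw [zero_pow two_ne_zero]
      positivity
    calc _ ≤ φ' ‖x‖ ^ 2 * ‖V x‖ ^ 2 * ρ x ^ 2 := sq_div_norm_mul_inner_mul_le _ _ _ _
      _ ≤ M * φ ‖x‖ * ‖V x‖ ^ 2 * ρ x ^ 2 := by
        gcongr
        exact hMφ ‖x‖ (norm_pos_iff.mpr hx)
      _ = M * (ρ x * φ ‖x‖) * (ρ x * ‖V x‖ ^ 2) := by ring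
  have hCS := sq_integral_le_integral_mul_integral_of_sq_le_mul
    (.of_forall fun x => mul_nonneg hM (mul_nonneg (hρpos x) (hφpos _ (norm_nonneg x))))
    (.of_forall fun x => mul_nonneg (hρpos x) (sq_nonneg _)) (hint1.const_mul M) hint2
    (.of_forall hpoint)
  rwa [integral_const_mul] at hCS

/-- analytic core of Proposition 4: weighted Cauchy–Schwarz.
If `φ'(r)² ≤ M φ(r)` for `r > 0`, then
`(∫ (φ'(|x|)/|x|)⟨V,x⟩ρ dx)² ≤ M (∫ ρφ(|x|) dx)(∫ ρ|V|² dx)`. -/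
theorem stmt5
    (n : ℕ) (hn : 1 ≤ n)
    (ρ : EuclideanSpace ℝ (Fin n) → ℝ)
    (V : EuclideanSpace ℝ (Fin n) → EuclideanSpace ℝ (Fin n))
    (hρmeas : Measurable ρ) (hVmeas : Measurable V)
    (hρpos : ∀ x, 0 ≤ ρ x)
    (φ φ' : ℝ → ℝ)
    (hφdiff : ∀ r : ℝ, 0 < r → HasDerivAt φ (φ' r) r)
    (hφpos : ∀ r : ℝ, 0 ≤ r → 0 ≤ φ r)
    (M : ℝ) (hM : 0 ≤ M)
    (hMφ : ∀ r : ℝ, 0 < r → φ' r ^ 2 ≤ M * φ r)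
    (hint1 : Integrable (fun x => ρ x * φ ‖x‖))
    (hint2 : Integrable (fun x => ρ x * ‖V x‖ ^ 2))
    (hint3 : Integrable (fun x : EuclideanSpace ℝ (Fin n) =>
      if x = 0 then 0 else (φ' ‖x‖ / ‖x‖) * ⟪V x, x⟫ * ρ x)) :
    (∫ x : EuclideanSpace ℝ (Fin n),
        if x = 0 then 0 else (φ' ‖x‖ / ‖x‖) * ⟪V x, x⟫ * ρ x) ^ 2
      ≤ M * (∫ x : EuclideanSpace ℝ (Fin n), ρ x * φ ‖x‖)
          * (∫ x : EuclideanSpace ℝ (Fin n), ρ x * ‖V x‖ ^ 2) :=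
  stmt5_general n ρ V hρpos φ φ' hφpos M hM hMφ hint1 hint2
end

section
/- Let R > 0 and k > 1, and set B = k/(R²(k−1)) and C = B(k−1) = k/R². Define φ : [0,∞) → ℝ by φ(r) = 1 − Br² for r ∈ [0, R − R/k], φ(r) = C(r−R)² for r ∈ (R − R/k, R], and φ(r) = 0 for r ≥ R. Then: (i) φ is continuously differentiable on [0,∞) with φ'(0) = 0; (ii) 0 ≤ φ(r) ≤ 1 for all r ≥ 0; (iii) φ'(r)² ≤ (4k/R²) φ(r) for all r ≥ 0; and (iv) sup over r ∈ (0,R] of φ'(r)²/φ(r) equals 4k/R² = 4C. -/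
/-!
Both junctions of `φ` are `C¹` joins: at the knot `r₀ = R - R/k` the two quadratics take the
common value `1/k` and the common slope `-2/R`, and at `R` the outer quadratic meets `0` with
slope `0`. On `(r₀, R]` one has `φ = C (r - R)²`, so `φ'² = 4Cφ` holds with equality there. On
`[0, r₀]` the inequality `4B²r² ≤ 4C(1 - Br²)` reduces, via `C = B(k - 1)`, to `kBr² ≤ k - 1`,
which is an equality at `r₀`.
-/

open scoped Classical

/-- The compactly supported weight function of equation (7) of the paper:
`φ(r) = 1 − Br²` on `[0, R−R/k]`, `φ(r) = C(r−R)²` on `(R−R/k, R]`, `φ(r) = 0`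
for `r ≥ R`, where `B = k/(R²(k−1))` and `C = B(k−1) = k/R²`. -/
noncomputable def phiWeight (R k r : ℝ) : ℝ :=
  if r ≤ R - R / k then 1 - (k / (R ^ 2 * (k - 1))) * r ^ 2
  else if r ≤ R then (k / R ^ 2) * (r - R) ^ 2
  else 0

open Filter Set

theorem hasDerivAt_ite_le {f g f' g' : ℝ → ℝ} {a : ℝ}
    (hf : ∀ x, HasDerivAt f (f' x) x) (hg : ∀ x, HasDerivAt g (g' x) x)
    (hfg : f a = g a) (hfg' : f' a = g' a) (x : ℝ) :
    HasDerivAt (fun y => if y ≤ a then f y else g y) (if x ≤ a then f' x else g' x) x := by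
  rcases lt_trichotomy x a with hxa | rfl | hax
  · rw [if_pos hxa.le]
    exact (hf x).congr_of_eventuallyEq <| (eventually_lt_nhds hxa).mono fun y hy => if_pos hy.le
  · have hleft : HasDerivWithinAt (fun y => if y ≤ x then f y else g y) (f' x) (Iic x) x :=
      (hf x).hasDerivWithinAt.congr (fun y hy => if_pos hy) (if_pos le_rfl)
    have hright : HasDerivWithinAt (fun y => if y ≤ x then f y else g y) (f' x) (Ici x) x := by
      refine hfg' ▸ (hg x).hasDerivWithinAt.congr (fun y hy => ?_) (by simp [hfg])
      rcases (mem_Ici.mp hy).eq_or_lt with rfl | hxy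
      · simp [hfg]
      · simp [not_le.mpr hxy]
    simpa using hleft.union hright
  · rw [if_neg (not_le.mpr hax)]
    exact (hg x).congr_of_eventuallyEq <|
      (eventually_gt_nhds hax).mono fun y hy => if_neg (not_le.mpr hy)

section PhiWeight

variable {R k : ℝ}

noncomputable def phiWeightDeriv (R k r : ℝ) : ℝ :=
  if r ≤ R - R / k then -(2 * (k / (R ^ 2 * (k - 1))) * r)
  else if r ≤ R then 2 * (k / R ^ 2) * (r - R)
  else 0

theorem phiWeight_knot_pos (hR : 0 < R) (hk : 1 < k) : 0 < R - R / k :=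
  sub_pos.mpr (div_lt_self hR hk)

theorem phiWeight_knot_le (hR : 0 < R) (hk : 1 < k) : R - R / k ≤ R :=
  sub_le_self R (div_nonneg hR.le (by linarith))

theorem hasDerivAt_phiWeight (hR : 0 < R) (hk : 1 < k) (r : ℝ) :
    HasDerivAt (phiWeight R k) (phiWeightDeriv R k r) r := by
  have hk1 : k - 1 ≠ 0 := sub_ne_zero.mpr hk.ne'
  have hinner : ∀ x, HasDerivAt (fun y => if y ≤ R then k / R ^ 2 * (y - R) ^ 2 else 0)
      (if x ≤ R then 2 * (k / R ^ 2) * (x - R) else 0) x :=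
    hasDerivAt_ite_le (fun x => ((((hasDerivAt_id x).sub_const R).pow 2).const_mul _).congr_deriv
      (by simp; ring)) (fun x => hasDerivAt_const x 0) (by simp) (by simp)
  refine hasDerivAt_ite_le (a := R - R / k) (f' := fun x => -(2 * (k / (R ^ 2 * (k - 1))) * x))
    (fun x => (((hasDerivAt_pow 2 x).const_mul _).const_sub 1).congr_deriv (by simp; ring))
    hinner ?_ ?_ r <;> rw [if_pos (phiWeight_knot_le hR hk)] <;>
    field_simp <;> ring

theorem continuous_phiWeightDeriv (hR : 0 < R) (hk : 1 < k) :
    Continuous (phiWeightDeriv R k) := by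
  refine Continuous.if_le (by fun_prop) ?_ continuous_id continuous_const fun x hx => ?_
  · exact Continuous.if_le (by fun_prop) continuous_const continuous_id continuous_const
      fun x hx => by simp [hx]
  · have hk1 : k - 1 ≠ 0 := sub_ne_zero.mpr hk.ne'
    rw [hx, if_pos (phiWeight_knot_le hR hk)]
    field_simp
    ring

theorem phiWeightDeriv_zero (hR : 0 < R) (hk : 1 < k) : phiWeightDeriv R k 0 = 0 := by
  simp [phiWeightDeriv, (phiWeight_knot_pos hR hk).le]

theorem phiWeight_coeff_mul_sq_mul_le (hR : 0 < R) (hk : 1 < k) {r : ℝ} (hr : 0 ≤ r)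
    (hr₀ : r ≤ R - R / k) : k / (R ^ 2 * (k - 1)) * r ^ 2 * k ≤ k - 1 := by
  have hk1 : 0 < k - 1 := sub_pos.mpr hk
  calc k / (R ^ 2 * (k - 1)) * r ^ 2 * k ≤ k / (R ^ 2 * (k - 1)) * (R - R / k) ^ 2 * k := by
        gcongr
    _ = k - 1 := by field_simp

theorem phiWeight_mem_Icc (hR : 0 < R) (hk : 1 < k) {r : ℝ} (hr : 0 ≤ r) :
    phiWeight R k r ∈ Icc 0 1 := by
  have hk0 : 0 < k := by linarith
  unfold phiWeight
  split_ifs with h₁ h₂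
  · have hbound := phiWeight_coeff_mul_sq_mul_le hR hk hr h₁
    have hnonneg : 0 ≤ k / (R ^ 2 * (k - 1)) * r ^ 2 := by
      have : 0 < k - 1 := sub_pos.mpr hk
      positivity
    constructor <;> nlinarith
  · have hsq : (r - R) ^ 2 ≤ (R / k) ^ 2 := by
      rw [sq_le_sq, abs_of_nonpos (by linarith), abs_of_pos (by positivity)]
      linarith
    refine ⟨by positivity, ?_⟩
    calc k / R ^ 2 * (r - R) ^ 2 ≤ k / R ^ 2 * (R / k) ^ 2 := by gcongr
      _ = 1 / k := by field_simp
      _ ≤ 1 := by rw [div_le_one hk0]; exact hk.le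
  · simp

theorem phiWeightDeriv_sq_le (hR : 0 < R) (hk : 1 < k) {r : ℝ} (hr : 0 ≤ r) :
    phiWeightDeriv R k r ^ 2 ≤ 4 * k / R ^ 2 * phiWeight R k r := by
  unfold phiWeight phiWeightDeriv
  split_ifs with h₁ h₂
  · have hbound := phiWeight_coeff_mul_sq_mul_le hR hk hr h₁
    set B := k / (R ^ 2 * (k - 1))
    have hB : 0 < B := by have : 0 < k - 1 := sub_pos.mpr hk; positivity
    have hC : 4 * k / R ^ 2 = 4 * (B * (k - 1)) := by
      have : k - 1 ≠ 0 := sub_ne_zero.mpr hk.ne'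
      simp only [B]; field_simp
    rw [hC]
    nlinarith [mul_le_mul_of_nonneg_left hbound hB.le]
  · exact le_of_eq (by ring)
  · simp

theorem phiWeight_pos (hR : 0 < R) (hk : 1 < k) {r : ℝ} (hr₀ : R - R / k < r) (hrR : r < R) :
    0 < phiWeight R k r := by
  have : 0 < k := by linarith
  rw [phiWeight, if_neg hr₀.not_ge, if_pos hrR.le]
  have : r - R ≠ 0 := sub_ne_zero.mpr hrR.ne
  positivity

theorem phiWeightDeriv_sq_eq {r : ℝ} (hr₀ : R - R / k < r) (hrR : r ≤ R) :
    phiWeightDeriv R k r ^ 2 = 4 * k / R ^ 2 * phiWeight R k r := by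
  rw [phiWeight, phiWeightDeriv, if_neg hr₀.not_ge, if_pos hrR, if_neg hr₀.not_ge, if_pos hrR]
  ring

theorem isGreatest_phiWeightDeriv_sq_div (hR : 0 < R) (hk : 1 < k) :
    IsGreatest ((fun r => phiWeightDeriv R k r ^ 2 / phiWeight R k r) '' Ioc 0 R)
      (4 * k / R ^ 2) := by
  obtain ⟨r, hr₀, hrR⟩ := exists_between (sub_lt_self R (div_pos hR (by linarith : 0 < k)))
  refine ⟨⟨r, ⟨(phiWeight_knot_pos hR hk).trans hr₀, hrR.le⟩, ?_⟩, ?_⟩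
  · dsimp only
    rw [phiWeightDeriv_sq_eq hr₀ hrR.le, mul_div_cancel_right₀ _ (phiWeight_pos hR hk hr₀ hrR).ne']
  · rintro _ ⟨r, hr, rfl⟩
    exact div_le_of_le_mul₀ (phiWeight_mem_Icc hR hk hr.1.le).1 (by positivity)
      (phiWeightDeriv_sq_le hR hk hr.1.le)

end PhiWeight

/-- properties of the weight function `φ` of equation (7):
(i) `φ` is continuously differentiable on `[0,∞)` with `φ'(0) = 0`;
(ii) `0 ≤ φ ≤ 1` on `[0,∞)`;
(iii) `φ'(r)² ≤ (4k/R²) φ(r)` on `[0,∞)`;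
(iv) the supremum of `φ'(r)²/φ(r)` over `r ∈ (0,R]` equals `4k/R² = 4C`. -/
theorem stmt6 (R k : ℝ) (hR : 0 < R) (hk : 1 < k) :
    ∃ φ' : ℝ → ℝ,
      ContinuousOn φ' (Set.Ici 0) ∧
      (∀ r : ℝ, 0 ≤ r → HasDerivAt (phiWeight R k) (φ' r) r) ∧
      φ' 0 = 0 ∧
      (∀ r : ℝ, 0 ≤ r → 0 ≤ phiWeight R k r ∧ phiWeight R k r ≤ 1) ∧
      (∀ r : ℝ, 0 ≤ r → φ' r ^ 2 ≤ (4 * k / R ^ 2) * phiWeight R k r) ∧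
      IsGreatest ((fun r => φ' r ^ 2 / phiWeight R k r) '' Set.Ioc 0 R)
        (4 * k / R ^ 2) :=
  ⟨phiWeightDeriv R k, (continuous_phiWeightDeriv hR hk).continuousOn,
    fun r _ => hasDerivAt_phiWeight hR hk r, phiWeightDeriv_zero hR hk,
    fun _ hr => phiWeight_mem_Icc hR hk hr, fun _ hr => phiWeightDeriv_sq_le hR hk hr,
    isGreatest_phiWeightDeriv_sq_div hR hk⟩
end
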